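/- arXiv:1702.00005 — 5 statements merged into one kernel-verified Lean document; each statement's English description precedes it below -/
import Mathlib

section
/- Let E be the 3×3 complex matrix with entries E₀₁ = E₁₂ = E₂₀ = 1 and all other entries 0, and for a positive integer n let L_n be the diagonal matrix diag(1, ν, ν⁻¹) with ν = exp(2πi/n). Then for every positive integer n, the subgroup of GL(3,ℂ) generated by E and L_n (this is the group Δ(3n²)) has order 3n². -/
open Matrix

/-- The matrix `E` with entries `E₀₁ = E₁₂ = E₂₀ = 1` and all other entries `0`. -/
noncomputable def Ematrix : Matrix (Fin 3) (Fin 3) ℂ := !![0, 1, 0; 0, 0, 1; 1, 0, 0]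

/-- The matrix `L_n = diag(1, ν, ν⁻¹)` with `ν = exp(2πi/n)`. -/
noncomputable def Lmatrix (n : ℕ) : Matrix (Fin 3) (Fin 3) ℂ :=
  Matrix.diagonal ![1, Complex.exp (2 * (Real.pi : ℂ) * Complex.I / (n : ℂ)),
    (Complex.exp (2 * (Real.pi : ℂ) * Complex.I / (n : ℂ)))⁻¹]

/-!
`E` normalises the group `T ≅ (ℤ/n)²` of diagonal matrices `diag(ν^a, ν^b, ν^(-a-b))`,
permuting the diagonal entries cyclically, and `T` is generated by `L_n` and `E L_n E⁻¹`.
Hence the group is `⟨E⟩ ⊔ T = ⟨E⟩ * T`. No nontrivial power of `E` is diagonal, so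
`⟨E⟩ ∩ T = 1`, the product map `⟨E⟩ × T → ⟨E⟩ * T` is a bijection, and the order is `3 · n²`.
-/
namespace Subgroup

variable {G : Type*} [Group G]

theorem card_sup_of_le_normalizer (H N : Subgroup G) (hHN : H ≤ normalizer N)
    (hdisj : Disjoint H N) : Nat.card ↥(H ⊔ N) = Nat.card H * Nat.card N := by
  have hrange : ((H ⊔ N : Subgroup G) : Set G) = Set.range fun g : H × N => (g.1 * g.2 : G) := by
    rw [coe_mul_of_left_le_normalizer_right H N hHN]
    ext x
    simp [Set.mem_mul]
  rw [← Nat.card_prod]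
  exact (Nat.card_congr (Equiv.setCongr hrange)).trans
    (Nat.card_range_of_injective (mul_injective_of_disjoint hdisj))

end Subgroup

namespace IsPrimitiveRoot

variable {R : Type*} [CommRing R] {ζ : Rˣ} {n : ℕ}

noncomputable def zmodPowHom (hζ : IsPrimitiveRoot ζ n) : Multiplicative (ZMod n) →* Rˣ :=
  (Subgroup.zpowers ζ).subtype.comp
    (AddEquiv.toMultiplicativeLeft hζ.zmodEquivZPowers).toMonoidHom

theorem zmodPowHom_injective (hζ : IsPrimitiveRoot ζ n) : Function.Injective hζ.zmodPowHom :=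
  Subtype.val_injective.comp (AddEquiv.toMultiplicativeLeft hζ.zmodEquivZPowers).injective

theorem zmodPowHom_ofAdd_one (hζ : IsPrimitiveRoot ζ n) :
    hζ.zmodPowHom (Multiplicative.ofAdd 1) = ζ := by
  have h := hζ.zmodEquivZPowers_apply_coe_nat 1
  simp only [Nat.cast_one, pow_one] at h
  simp [zmodPowHom, AddEquiv.toMultiplicativeLeft, h]

end IsPrimitiveRoot

namespace Matrix.GeneralLinearGroup

variable {m R : Type*} [Fintype m] [DecidableEq m] [CommRing R]

noncomputable def diagonal : (m → Rˣ) →* GL m R :=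
  (Units.map (diagonalRingHom m R).toMonoidHom).comp MulEquiv.piUnits.symm.toMonoidHom

@[simp]
theorem val_diagonal (d : m → Rˣ) :
    (GeneralLinearGroup.diagonal d : Matrix m m R) = Matrix.diagonal fun i => (d i : R) :=
  rfl

theorem diagonal_injective :
    Function.Injective (GeneralLinearGroup.diagonal : (m → Rˣ) →* GL m R) := by
  intro d d' h
  funext i
  ext
  simpa using congrArg (fun g : GL m R => (g : Matrix m m R) i i) h

end Matrix.GeneralLinearGroup

open Multiplicative

theorem Ematrix_mul_diagonal (d : Fin 3 → ℂ) :
    Ematrix * diagonal d = diagonal (fun i => d (i + 1)) * Ematrix := by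
  ext i j
  fin_cases i <;> fin_cases j <;> simp [Ematrix]

theorem Ematrix_pow_three : Ematrix ^ 3 = 1 := by
  ext i j
  fin_cases i <;> fin_cases j <;> simp [Ematrix, pow_succ, mul_apply, Fin.sum_univ_three]

section

variable {E : GL (Fin 3) ℂ} (hE : (E : Matrix (Fin 3) (Fin 3) ℂ) = Ematrix)
include hE

theorem orderOf_eq_three : orderOf E = 3 := by
  refine orderOf_eq_prime (Units.ext ?_) fun h => ?_
  · rw [Units.val_pow_eq_pow_val, hE, Ematrix_pow_three, Units.val_one]
  · simpa [hE, Ematrix] using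
      congrArg (fun g : GL (Fin 3) ℂ => (g : Matrix (Fin 3) (Fin 3) ℂ) 0 0) h

theorem disjoint_zpowers_range_diagonal :
    Disjoint (Subgroup.zpowers E)
      (GeneralLinearGroup.diagonal : (Fin 3 → ℂˣ) →* GL (Fin 3) ℂ).range := by
  rw [Subgroup.disjoint_def]
  rintro _ hk ⟨d, hd⟩
  have hfin : IsOfFinOrder E := orderOf_pos_iff.mp (by rw [orderOf_eq_three hE]; norm_num)
  obtain ⟨k, rfl : E ^ k = _⟩ := hfin.mem_powers_iff_mem_zpowers.mpr hk
  rw [← pow_mod_orderOf, orderOf_eq_three hE] at hd ⊢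
  have h00 := congrArg (fun g : GL (Fin 3) ℂ => (g : Matrix (Fin 3) (Fin 3) ℂ) 0 0) hd
  have hr : k % 3 < 3 := Nat.mod_lt k three_pos
  -- the `(0, 0)` entry of `E` and `E²` vanishes, that of an invertible diagonal matrix does not
  interval_cases k % 3
  · exact pow_zero E
  all_goals simp [hE, Ematrix, sq, mul_apply, Fin.sum_univ_three] at h00

end

section Torus

variable {A : Type*} [AddCommGroup A]

noncomputable def torusHom (χ : Multiplicative A →* ℂˣ) :
    Multiplicative (A × A) →* GL (Fin 3) ℂ :=
  GeneralLinearGroup.diagonal.comp <| MonoidHom.mk'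
    (fun x => ![χ (ofAdd x.toAdd.1), χ (ofAdd x.toAdd.2), χ (ofAdd (-x.toAdd.1 - x.toAdd.2))])
    fun x y => by
      ext i : 1
      fin_cases i <;> simp only [Fin.zero_eta, Fin.mk_one, Fin.reduceFinMk, cons_val,
        Pi.mul_apply, toAdd_mul, Prod.fst_add, Prod.snd_add, ← map_mul, ← ofAdd_add]
      congr 2
      abel

variable (χ : Multiplicative A →* ℂˣ)

theorem val_torusHom (a b : A) : (torusHom χ (ofAdd (a, b)) : Matrix (Fin 3) (Fin 3) ℂ) =
    diagonal ![(χ (ofAdd a) : ℂ), χ (ofAdd b), χ (ofAdd (-a - b))] := by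
  simp only [torusHom, MonoidHom.comp_apply, MonoidHom.mk'_apply,
    GeneralLinearGroup.val_diagonal]
  congr 1
  funext i
  fin_cases i <;> rfl

theorem torusHom_injective (hχ : Function.Injective χ) : Function.Injective (torusHom χ) := by
  intro x y h
  have hd := congr_fun (GeneralLinearGroup.diagonal_injective h)
  exact toAdd.injective (Prod.ext (ofAdd.injective (hχ (hd 0))) (ofAdd.injective (hχ (hd 1))))

variable {E : GL (Fin 3) ℂ} (hE : (E : Matrix (Fin 3) (Fin 3) ℂ) = Ematrix)
include hE

theorem conj_torusHom (a b : A) :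
    E * torusHom χ (ofAdd (a, b)) * E⁻¹ = torusHom χ (ofAdd (b, -a - b)) := by
  rw [mul_inv_eq_iff_eq_mul]
  ext1
  simp only [Units.val_mul, hE, val_torusHom, Ematrix_mul_diagonal]
  congr 2
  funext i
  fin_cases i <;> simp only [Fin.zero_eta, Fin.mk_one, Fin.reduceFinMk, cons_val, Fin.reduceAdd]
  rw [show -b - (-a - b) = a by abel]

theorem mem_normalizer_range_torusHom : E ∈ Subgroup.normalizer (torusHom χ).range := by
  rw [Subgroup.mem_normalizer_iff]
  intro g
  constructor
  · rintro ⟨x, rfl⟩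
    exact ⟨_, (conj_torusHom χ hE x.toAdd.1 x.toAdd.2).symm⟩
  · rintro ⟨x, hx⟩
    refine ⟨ofAdd (-x.toAdd.1 - x.toAdd.2, x.toAdd.1), ?_⟩
    have h := conj_torusHom χ hE (-x.toAdd.1 - x.toAdd.2) x.toAdd.1
    rw [show -(-x.toAdd.1 - x.toAdd.2) - x.toAdd.1 = x.toAdd.2 by abel, Prod.mk.eta,
      ofAdd_toAdd, hx] at h
    simpa using h

end Torus

section ZMod

variable {n : ℕ} (χ : Multiplicative (ZMod n) →* ℂˣ)
variable {E : GL (Fin 3) ℂ} (hE : (E : Matrix (Fin 3) (Fin 3) ℂ) = Ematrix)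
include hE

theorem range_torusHom_le_closure :
    (torusHom χ).range ≤ Subgroup.closure {E, torusHom χ (ofAdd (0, 1))} := by
  rintro _ ⟨x, rfl⟩
  have hx : x = ofAdd (1, -1) ^ (x.toAdd.1.cast : ℤ) *
      ofAdd (0, 1) ^ ((x.toAdd.1 + x.toAdd.2).cast : ℤ) := by
    apply toAdd.injective
    ext <;> simp
  have hconj : torusHom χ (ofAdd (1, -1)) = E * torusHom χ (ofAdd (0, 1)) * E⁻¹ := by
    rw [conj_torusHom χ hE]
    simp
  have hEmem : E ∈ Subgroup.closure {E, torusHom χ (ofAdd (0, 1))} :=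
    Subgroup.subset_closure (Set.mem_insert _ _)
  have hLmem : torusHom χ (ofAdd (0, 1)) ∈ Subgroup.closure {E, torusHom χ (ofAdd (0, 1))} :=
    Subgroup.subset_closure (Set.mem_insert_of_mem _ rfl)
  rw [hx, map_mul, map_zpow, map_zpow, hconj]
  exact mul_mem (zpow_mem (mul_mem (mul_mem hEmem hLmem) (inv_mem hEmem)) _) (zpow_mem hLmem _)

theorem closure_eq_zpowers_sup_range_torusHom :
    Subgroup.closure {E, torusHom χ (ofAdd (0, 1))} =
      Subgroup.zpowers E ⊔ (torusHom χ).range := by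
  refine le_antisymm ?_ (sup_le ?_ (range_torusHom_le_closure χ hE))
  · rw [Subgroup.closure_le, Set.insert_subset_iff, Set.singleton_subset_iff]
    exact ⟨Subgroup.mem_sup_left (Subgroup.mem_zpowers E), Subgroup.mem_sup_right ⟨_, rfl⟩⟩
  · exact Subgroup.zpowers_le.mpr (Subgroup.subset_closure (Set.mem_insert _ _))

theorem card_closure_torusHom (hχ : Function.Injective χ) :
    Nat.card (Subgroup.closure {E, torusHom χ (ofAdd (0, 1))}) = 3 * n ^ 2 := by
  have hnormal : Subgroup.zpowers E ≤ Subgroup.normalizer (torusHom χ).range :=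
    Subgroup.zpowers_le.mpr (mem_normalizer_range_torusHom χ hE)
  have hdisj : Disjoint (Subgroup.zpowers E) (torusHom χ).range :=
    (disjoint_zpowers_range_diagonal hE).mono_right <| by
      rintro _ ⟨x, rfl⟩
      exact ⟨_, rfl⟩
  rw [closure_eq_zpowers_sup_range_torusHom χ hE,
    Subgroup.card_sup_of_le_normalizer _ _ hnormal hdisj, Nat.card_zpowers, orderOf_eq_three hE,
    ← Nat.card_congr (MonoidHom.ofInjective (torusHom_injective χ hχ)).toEquiv,
    Nat.card_congr toAdd, Nat.card_prod, Nat.card_zmod, sq]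

end ZMod

/-- The group `Δ(3n²)`, generated by `E` and `L_n` inside `GL(3,ℂ)`, has order `3n²`. -/
theorem delta_3n2_order (n : ℕ) (hn : 0 < n) (E L : GL (Fin 3) ℂ)
    (hE : E.val = Ematrix) (hL : L.val = Lmatrix n) :
    Nat.card ↥(Subgroup.closure ({E, L} : Set (GL (Fin 3) ℂ))) = 3 * n ^ 2 := by
  have hζ := (Complex.isPrimitiveRoot_exp n hn.ne').isUnit_unit' hn.ne'
  have hL' : L = torusHom hζ.zmodPowHom (ofAdd (0, 1)) := by
    ext1
    rw [hL, val_torusHom]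
    simp [Lmatrix, hζ.zmodPowHom_ofAdd_one]
  rw [hL']
  exact card_closure_torusHom _ hE hζ.zmodPowHom_injective
end

section
/- Let E be the 3×3 complex matrix with entries E₀₁ = E₁₂ = E₂₀ = 1 and all other entries 0, let I be the 3×3 complex matrix with entries I₀₂ = I₁₁ = I₂₀ = −1 and all other entries 0, and for a positive integer n let L_n = diag(1, ν, ν⁻¹) with ν = exp(2πi/n). Then for every positive integer n, the subgroup of GL(3,ℂ) generated by E, I and L_n (this is the group Δ(6n²)) has order 6n². -/
open Matrix

/-- The matrix `I` with entries `I₀₂ = I₁₁ = I₂₀ = −1` and all other entries `0`. -/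
noncomputable def Imatrix : Matrix (Fin 3) (Fin 3) ℂ := !![0, 0, -1; 0, -1, 0; -1, 0, 0]

/-
Write `ζ = exp(2πi/n)` and, for `v : Fin 3 → ZMod n` and `σ ∈ S₃`, let
`M(v, σ) = sign σ · diag(ζ^v) · P_σ`. These signed monomial matrices multiply like the semidirect
product `(ZMod n)³ ⋊ S₃`; those with `∑ v = 0` form a subgroup on which `(v, σ) ↦ M(v, σ)` is
injective, so it has order `n² · 3!`. It contains `E = M(0, 3-cycle)`, `I = M(0, transposition)`
and `L = M((0, 1, -1), 1)`. Conversely, `E` and `I` give every `M(0, σ)` because a 3-cycle and an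
adjacent transposition generate `S₃`, and `L` with its conjugate by `E` give `M(v, 1)` for
`v = (0, 1, -1)` and `(1, -1, 0)`, which generate the zero-sum vectors.
-/

open Equiv Equiv.Perm

namespace Matrix

variable {ι R : Type*} [DecidableEq ι]

def monomial [Zero R] (d : ι → R) (σ : Perm ι) : Matrix ι ι R :=
  of fun i j => if σ j = i then d i else 0

theorem monomial_mul [Fintype ι] [NonUnitalNonAssocSemiring R] (d e : ι → R) (σ τ : Perm ι) :
    monomial d σ * monomial e τ = monomial (d * e ∘ σ.symm) (σ * τ) := by
  ext i j
  rw [mul_apply, Finset.sum_eq_single (τ j)]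
  · by_cases h : σ (τ j) = i
    · subst h; simp [monomial]
    · simp [monomial, h]
  · intro k _ hk
    simp [monomial, Ne.symm hk]
  · simp

theorem monomial_one_one [MulZeroOneClass R] : monomial (1 : ι → R) 1 = 1 := by
  ext i j
  simp [monomial, one_apply, eq_comm]

theorem monomial_inj [Zero R] {d e : ι → R} {σ τ : Perm ι} (hd : ∀ i, d i ≠ 0) :
    monomial d σ = monomial e τ ↔ d = e ∧ σ = τ := by
  refine ⟨fun h => ?_, fun ⟨hde, hστ⟩ => hde ▸ hστ ▸ rfl⟩
  have hστ : σ = τ := by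
    ext j
    by_contra hne
    have := congrFun (congrFun h (σ j)) j
    simp [monomial, Ne.symm hne, hd] at this
  subst hστ
  refine ⟨funext fun i => ?_, rfl⟩
  simpa [monomial] using congrFun (congrFun h i) (σ.symm i)

namespace GeneralLinearGroup

variable [Fintype ι] [Semiring R]

def monomial (d : ι → Rˣ) (σ : Perm ι) : GL ι R where
  val := Matrix.monomial (fun i => (d i : R)) σ
  inv := Matrix.monomial (fun i => ↑(d (σ i))⁻¹) σ⁻¹
  val_inv := by
    rw [Matrix.monomial_mul, mul_inv_cancel, ← Matrix.monomial_one_one]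
    congr 1
    ext i
    simp
  inv_val := by
    rw [Matrix.monomial_mul, inv_mul_cancel, ← Matrix.monomial_one_one]
    congr 1
    ext i
    simp [Perm.inv_def]

@[simp]
theorem coe_monomial (d : ι → Rˣ) (σ : Perm ι) :
    (GeneralLinearGroup.monomial d σ : Matrix ι ι R) = Matrix.monomial (fun i => (d i : R)) σ :=
  rfl

theorem monomial_mul (d e : ι → Rˣ) (σ τ : Perm ι) :
    GeneralLinearGroup.monomial d σ * GeneralLinearGroup.monomial e τ =
      GeneralLinearGroup.monomial (d * e ∘ σ.symm) (σ * τ) :=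
  Units.ext <| by simp [Matrix.monomial_mul]; rfl

theorem monomial_one_one : GeneralLinearGroup.monomial (1 : ι → Rˣ) 1 = 1 :=
  Units.ext Matrix.monomial_one_one

theorem monomial_inj [Nontrivial R] {d e : ι → Rˣ} {σ τ : Perm ι} :
    GeneralLinearGroup.monomial d σ = GeneralLinearGroup.monomial e τ ↔ d = e ∧ σ = τ := by
  rw [← Units.val_inj, coe_monomial, coe_monomial, Matrix.monomial_inj fun i => (d i).ne_zero]
  simp [funext_iff, Units.val_inj]

end GeneralLinearGroup

end Matrix

theorem Nat.card_subtype_sum_eq_zero {ι A : Type*} [Fintype ι] [Nonempty ι] [AddCommGroup A]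
    [Finite A] :
    Nat.card {v : ι → A // ∑ i, v i = 0} = Nat.card A ^ (Fintype.card ι - 1) := by
  classical
  let sum : (ι → A) →+ A :=
    AddMonoidHom.mk' (fun v => ∑ i, v i) fun _ _ => Finset.sum_add_distrib
  have hsurj : Function.Surjective sum := by
    intro a
    obtain ⟨i⟩ := ‹Nonempty ι›
    exact ⟨Pi.single i a, by simp [sum]⟩
  have key := sum.ker.card_mul_index
  rw [AddSubgroup.index_ker, AddMonoidHom.range_eq_top.mpr hsurj,
    Nat.card_congr AddSubgroup.topEquiv.toEquiv, Nat.card_fun, Nat.card_eq_fintype_card (α := ι),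
    ← Nat.sub_one_add_one_eq_of_pos Fintype.card_pos, pow_succ] at key
  exact Nat.eq_of_mul_eq_mul_right Nat.card_pos key

section Delta

variable {ι : Type*} [Fintype ι] [DecidableEq ι] {n : ℕ} [NeZero n]

noncomputable def deltaMonomial (v : ι → ZMod n) (σ : Perm ι) : GL ι ℂ :=
  GeneralLinearGroup.monomial
    (fun i => Units.map (Int.castRingHom ℂ).toMonoidHom (Perm.sign σ) *
      Circle.toUnits (ZMod.toCircle (v i))) σ

theorem coe_deltaMonomial_apply (v : ι → ZMod n) (σ : Perm ι) (i j : ι) :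
    (deltaMonomial v σ : Matrix ι ι ℂ) i j =
      if σ j = i then (Perm.sign σ : ℂ) * ZMod.stdAddChar (v i) else 0 := by
  simp [deltaMonomial, Matrix.monomial, ZMod.stdAddChar_apply]

theorem deltaMonomial_mul (v w : ι → ZMod n) (σ τ : Perm ι) :
    deltaMonomial v σ * deltaMonomial w τ = deltaMonomial (v + w ∘ σ.symm) (σ * τ) := by
  rw [deltaMonomial, deltaMonomial, GeneralLinearGroup.monomial_mul, deltaMonomial]
  congr 1
  ext i
  simp [AddChar.map_add_eq_mul]
  ring

theorem deltaMonomial_zero_one : deltaMonomial (0 : ι → ZMod n) 1 = 1 := by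
  rw [deltaMonomial, ← GeneralLinearGroup.monomial_one_one]
  congr 1
  ext i
  simp

theorem deltaMonomial_inv (v : ι → ZMod n) (σ : Perm ι) :
    (deltaMonomial v σ)⁻¹ = deltaMonomial (-(v ∘ σ)) σ⁻¹ := by
  refine inv_eq_of_mul_eq_one_right ?_
  rw [deltaMonomial_mul, mul_inv_cancel, ← deltaMonomial_zero_one (n := n)]
  congr 1
  ext i
  simp

theorem deltaMonomial_inj {v w : ι → ZMod n} {σ τ : Perm ι} :
    deltaMonomial v σ = deltaMonomial w τ ↔ v = w ∧ σ = τ := by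
  refine ⟨fun h => ?_, fun ⟨hvw, hστ⟩ => hvw ▸ hστ ▸ rfl⟩
  obtain ⟨hcoeff, rfl⟩ := GeneralLinearGroup.monomial_inj.mp h
  refine ⟨funext fun i => ZMod.injective_toCircle (Circle.ext ?_), rfl⟩
  simpa using congrArg Units.val (mul_left_cancel (congrFun hcoeff i))

variable (ι n) in
def deltaGroup : Subgroup (GL ι ℂ) where
  carrier := {g | ∃ (v : ι → ZMod n) (σ : Perm ι), ∑ i, v i = 0 ∧ deltaMonomial v σ = g}
  one_mem' := ⟨0, 1, by simp, deltaMonomial_zero_one⟩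
  mul_mem' := by
    rintro _ _ ⟨v, σ, hv, rfl⟩ ⟨w, τ, hw, rfl⟩
    refine ⟨_, _, ?_, (deltaMonomial_mul v w σ τ).symm⟩
    simp [Finset.sum_add_distrib, hv, Equiv.sum_comp σ.symm w, hw]
  inv_mem' := by
    rintro _ ⟨v, σ, hv, rfl⟩
    refine ⟨_, _, ?_, (deltaMonomial_inv v σ).symm⟩
    simp [Equiv.sum_comp σ v, hv]

theorem card_deltaGroup [Nonempty ι] :
    Nat.card (deltaGroup ι n) = n ^ (Fintype.card ι - 1) * (Fintype.card ι).factorial := by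
  let f : {v : ι → ZMod n // ∑ i, v i = 0} × Perm ι → deltaGroup ι n :=
    fun p => ⟨deltaMonomial p.1.1 p.2, p.1.1, p.2, p.1.2, rfl⟩
  have hf : Function.Bijective f := by
    refine ⟨fun p q h => ?_, ?_⟩
    · obtain ⟨hv, hσ⟩ := deltaMonomial_inj.mp (congrArg Subtype.val h)
      exact Prod.ext (Subtype.ext hv) hσ
    · rintro ⟨_, v, σ, hv, rfl⟩
      exact ⟨(⟨v, hv⟩, σ), rfl⟩
  rw [← Nat.card_eq_of_bijective f hf, Nat.card_prod, Nat.card_subtype_sum_eq_zero,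
    Nat.card_zmod, Nat.card_perm, Nat.card_eq_fintype_card]

theorem deltaMonomial_add_one (v w : ι → ZMod n) :
    deltaMonomial (v + w) 1 = deltaMonomial v 1 * deltaMonomial w 1 := by
  rw [deltaMonomial_mul]
  rfl

theorem deltaMonomial_nsmul_one (k : ℕ) (v : ι → ZMod n) :
    deltaMonomial (k • v) 1 = deltaMonomial v 1 ^ k := by
  induction k with
  | zero => simpa using deltaMonomial_zero_one (n := n)
  | succ k ih => rw [succ_nsmul, deltaMonomial_add_one, ih, pow_succ]

variable (ι n) in
noncomputable def deltaPermHom : Perm ι →* GL ι ℂ where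
  toFun := deltaMonomial (0 : ι → ZMod n)
  map_one' := deltaMonomial_zero_one
  map_mul' σ τ := by
    rw [deltaMonomial_mul]
    congr 1
    ext i
    simp

@[simp]
theorem deltaPermHom_apply (σ : Perm ι) :
    deltaPermHom ι n σ = deltaMonomial (0 : ι → ZMod n) σ :=
  rfl

theorem deltaMonomial_eq_mul_deltaPermHom (v : ι → ZMod n) (σ : Perm ι) :
    deltaMonomial v σ = deltaMonomial v 1 * deltaPermHom ι n σ := by
  rw [deltaPermHom_apply, deltaMonomial_mul]
  congr 1
  ext i
  simp

theorem deltaMonomial_conj (σ : Perm ι) (w : ι → ZMod n) :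
    deltaPermHom ι n σ * deltaMonomial w 1 * (deltaPermHom ι n σ)⁻¹ =
      deltaMonomial (w ∘ σ.symm) 1 := by
  rw [deltaPermHom_apply, deltaMonomial_inv, deltaMonomial_mul, deltaMonomial_mul, mul_one,
    mul_inv_cancel]
  congr 1
  ext i
  simp

end Delta

theorem closure_finRotate_inv_swap :
    Subgroup.closure ({(finRotate 3)⁻¹, swap 0 2} : Set (Perm (Fin 3))) = ⊤ := by
  have hswap : swap (0 : Fin 3) ((finRotate 3)⁻¹ 0) = swap 0 2 := by decide
  rw [← hswap]
  exact closure_cycle_adjacent_swap isCycle_finRotate.inv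
    (by rw [Perm.support_inv, support_finRotate]) 0

theorem Fin.eq_nsmul_add_nsmul_of_sum_eq_zero {n : ℕ} [NeZero n] (v : Fin 3 → ZMod n)
    (hv : ∑ i, v i = 0) :
    v = (v 0).val • ![1, -1, 0] + (v 0 + v 1).val • ![0, 1, -1] := by
  rw [Fin.sum_univ_three] at hv
  ext i
  fin_cases i <;> simp
  linear_combination hv

section Fin3

variable {n : ℕ} [NeZero n]

theorem Ematrix_eq_deltaPermHom :
    Ematrix = (deltaPermHom (Fin 3) n (finRotate 3)⁻¹ : Matrix _ _ ℂ) := by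
  ext i j
  fin_cases i <;> fin_cases j <;>
    simp [Ematrix, coe_deltaMonomial_apply, sign_finRotate] <;> decide

theorem Imatrix_eq_deltaPermHom :
    Imatrix = (deltaPermHom (Fin 3) n (swap 0 2) : Matrix _ _ ℂ) := by
  ext i j
  fin_cases i <;> fin_cases j <;> simp [Imatrix, coe_deltaMonomial_apply] <;> decide

theorem Lmatrix_eq_deltaMonomial :
    Lmatrix n = (deltaMonomial (![0, 1, -1] : Fin 3 → ZMod n) 1 : Matrix _ _ ℂ) := by
  ext i j
  have h1 := ZMod.stdAddChar_coe (N := n) 1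
  have h2 := ZMod.stdAddChar_coe (N := n) (-1)
  push_cast at h1 h2
  fin_cases i <;> fin_cases j <;>
    simp [Lmatrix, coe_deltaMonomial_apply, h1, h2, ← Complex.exp_neg, neg_div]

theorem range_deltaPermHom :
    (deltaPermHom (Fin 3) n).range =
      Subgroup.closure
        {deltaPermHom (Fin 3) n (finRotate 3)⁻¹, deltaPermHom (Fin 3) n (swap 0 2)} := by
  rw [MonoidHom.range_eq_map, ← closure_finRotate_inv_swap, MonoidHom.map_closure, Set.image_pair]

theorem closure_eq_deltaGroup :
    Subgroup.closure {deltaPermHom (Fin 3) n (finRotate 3)⁻¹, deltaPermHom (Fin 3) n (swap 0 2),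
      deltaMonomial (![0, 1, -1] : Fin 3 → ZMod n) 1} = deltaGroup (Fin 3) n := by
  set H := Subgroup.closure {deltaPermHom (Fin 3) n (finRotate 3)⁻¹,
    deltaPermHom (Fin 3) n (swap 0 2), deltaMonomial (![0, 1, -1] : Fin 3 → ZMod n) 1}
  refine le_antisymm ((Subgroup.closure_le _).mpr ?_) ?_
  · rintro g (rfl | rfl | rfl)
    · exact ⟨0, _, by simp, rfl⟩
    · exact ⟨0, _, by simp, rfl⟩
    · exact ⟨_, 1, by simp [Fin.sum_univ_three], rfl⟩
  rintro _ ⟨v, σ, hv, rfl⟩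
  have hperm (τ : Perm (Fin 3)) : deltaPermHom (Fin 3) n τ ∈ H := by
    have hτ : deltaPermHom (Fin 3) n τ ∈ (deltaPermHom (Fin 3) n).range := ⟨τ, rfl⟩
    rw [range_deltaPermHom] at hτ
    exact Subgroup.closure_mono
      (Set.insert_subset_insert (Set.singleton_subset_iff.mpr (Set.mem_insert _ _))) hτ
  have hL : deltaMonomial (![0, 1, -1] : Fin 3 → ZMod n) 1 ∈ H :=
    Subgroup.subset_closure (by simp)
  have hEL : deltaMonomial (![1, -1, 0] : Fin 3 → ZMod n) 1 ∈ H := by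
    have hrot : (![1, -1, 0] : Fin 3 → ZMod n) = ![0, 1, -1] ∘ ((finRotate 3)⁻¹).symm := by
      ext i; fin_cases i <;> rfl
    rw [hrot, ← deltaMonomial_conj]
    exact mul_mem (mul_mem (hperm _) hL) (inv_mem (hperm _))
  rw [deltaMonomial_eq_mul_deltaPermHom, Fin.eq_nsmul_add_nsmul_of_sum_eq_zero v hv,
    deltaMonomial_add_one, deltaMonomial_nsmul_one, deltaMonomial_nsmul_one]
  exact mul_mem (mul_mem (pow_mem hEL _) (pow_mem hL _)) (hperm σ)

end Fin3

/-- The group `Δ(6n²)`, generated by `E`, `I` and `L_n` inside `GL(3,ℂ)`, has order `6n²`. -/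
theorem delta_6n2_order (n : ℕ) (hn : 0 < n) (E I L : GL (Fin 3) ℂ)
    (hE : E.val = Ematrix) (hI : I.val = Imatrix) (hL : L.val = Lmatrix n) :
    Nat.card ↥(Subgroup.closure ({E, I, L} : Set (GL (Fin 3) ℂ))) = 6 * n ^ 2 := by
  have : NeZero n := ⟨hn.ne'⟩
  obtain rfl : E = deltaPermHom (Fin 3) n (finRotate 3)⁻¹ :=
    Units.ext (hE.trans Ematrix_eq_deltaPermHom)
  obtain rfl : I = deltaPermHom (Fin 3) n (swap 0 2) :=
    Units.ext (hI.trans Imatrix_eq_deltaPermHom)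
  obtain rfl : L = deltaMonomial ![0, 1, -1] 1 :=
    Units.ext (hL.trans Lmatrix_eq_deltaMonomial)
  rw [closure_eq_deltaGroup, card_deltaGroup]
  simp [Nat.factorial]
  ring
end

section
/- The subgroup of GL(3,ℂ) generated by the matrices E and L₂ = diag(1, −1, −1) (the group Δ(3·2²)) is isomorphic, as a group, to the alternating group A₄ of even permutations of four objects (Mathlib: alternatingGroup (Fin 4)). -/
open Matrix

/-- The matrix `L₂ = diag(1, −1, −1)`. -/
noncomputable def L2matrix : Matrix (Fin 3) (Fin 3) ℂ := Matrix.diagonal ![1, -1, -1]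

/-!
The columns `v₀, …, v₃` of `V = !![1, 1, -1, -1; 1, -1, 1, -1; 1, -1, -1, 1]` are the vertices
of a regular tetrahedron: `V Vᵀ = 4` and `Vᵀ V = 4 - J` with `J` the all-ones matrix. Since
`Vᵀ V` commutes with permutation matrices, `σ ↦ ¼ V P_σ Vᵀ` is a faithful representation of `S₄`
on `K³` (for `2 ≠ 0` in `K`) in which `σ` sends `vᵢ` to `v_{σ i}`. It maps the 3-cycle `(1 3 2)`
to `E` and `(0 1)(2 3)` to `L₂`; these generate `A₄`, so `⟨E, L₂⟩` is the isomorphic image of `A₄`.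
-/

open Equiv

namespace Tetrahedral

variable (K : Type*) [Field K]

def vertices : Matrix (Fin 3) (Fin 4) K := !![1, 1, -1, -1; 1, -1, 1, -1; 1, -1, -1, 1]

lemma vertices_mul_transpose : vertices K * (vertices K)ᵀ = (4 : K) • 1 := by
  ext i j
  fin_cases i <;> fin_cases j <;>
    simp [vertices, mul_apply, Fin.sum_univ_four, one_apply] <;> norm_num

lemma transpose_mul_vertices :
    (vertices K)ᵀ * vertices K = of fun i j => if i = j then 3 else -1 := by
  ext i j
  fin_cases i <;> fin_cases j <;> simp [vertices, mul_apply, Fin.sum_univ_three] <;> norm_num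

lemma commute_permMatrix_transpose_mul_vertices (σ : Perm (Fin 4)) :
    Commute (σ.permMatrix K) ((vertices K)ᵀ * vertices K) := by
  ext i j
  simp [PEquiv.toMatrix_toPEquiv_mul, PEquiv.mul_toMatrix_toPEquiv, transpose_mul_vertices,
    Equiv.eq_symm_apply]

lemma vertices_mul_permMatrix_inv (σ : Perm (Fin 4)) :
    vertices K * σ⁻¹.permMatrix K = (vertices K).submatrix id σ := by
  rw [PEquiv.mul_toMatrix_toPEquiv, Perm.inv_def, symm_symm]

variable [NeZero (2 : K)]

lemma four_ne_zero_of_neZero_two : (4 : K) ≠ 0 := by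
  simpa [show (4 : K) = 2 * 2 by norm_num] using two_ne_zero

noncomputable def symmetry (σ : Perm (Fin 4)) : Matrix (Fin 3) (Fin 3) K :=
  (4 : K)⁻¹ • (vertices K * σ⁻¹.permMatrix K * (vertices K)ᵀ)

variable {K}

lemma symmetry_mul_vertices (σ : Perm (Fin 4)) :
    symmetry K σ * vertices K = vertices K * σ⁻¹.permMatrix K := by
  have h4 := four_ne_zero_of_neZero_two K
  calc symmetry K σ * vertices K
      = (4 : K)⁻¹ •
          (vertices K * (σ⁻¹.permMatrix K * ((vertices K)ᵀ * vertices K))) := by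
        simp only [symmetry, smul_mul, Matrix.mul_assoc]
    _ = (4 : K)⁻¹ • (vertices K * (vertices K)ᵀ * vertices K * σ⁻¹.permMatrix K) := by
        rw [(commute_permMatrix_transpose_mul_vertices K σ⁻¹).eq]; simp only [Matrix.mul_assoc]
    _ = vertices K * σ⁻¹.permMatrix K := by
        rw [vertices_mul_transpose, smul_mul, Matrix.one_mul, smul_mul, inv_smul_smul₀ h4]

lemma symmetry_eq_of_mul_vertices {σ : Perm (Fin 4)} {A : Matrix (Fin 3) (Fin 3) K}
    (h : A * vertices K = vertices K * σ⁻¹.permMatrix K) : symmetry K σ = A := by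
  have h4 := four_ne_zero_of_neZero_two K
  calc symmetry K σ = (4 : K)⁻¹ • (A * vertices K * (vertices K)ᵀ) := by rw [h]; rfl
    _ = A := by
        rw [Matrix.mul_assoc, vertices_mul_transpose, Matrix.mul_smul, Matrix.mul_one,
          inv_smul_smul₀ h4]

lemma symmetry_one : symmetry K 1 = 1 :=
  symmetry_eq_of_mul_vertices (by simp)

lemma symmetry_mul (σ τ : Perm (Fin 4)) :
    symmetry K (σ * τ) = symmetry K σ * symmetry K τ :=
  symmetry_eq_of_mul_vertices <| by
    rw [Matrix.mul_assoc, symmetry_mul_vertices, ← Matrix.mul_assoc, symmetry_mul_vertices,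
      Matrix.mul_assoc, _root_.mul_inv_rev, permMatrix_mul]

variable (K) in
noncomputable def symmetryHom : Perm (Fin 4) →* GL (Fin 3) K :=
  MonoidHom.toHomUnits
    { toFun := symmetry K, map_one' := symmetry_one, map_mul' := symmetry_mul }

lemma symmetryHom_injective : Function.Injective (symmetryHom K) := by
  rw [injective_iff_map_eq_one]
  intro σ hσ
  have hV : vertices K = vertices K * σ⁻¹.permMatrix K := by
    rw [← symmetry_mul_vertices, show symmetry K σ = 1 from congrArg Units.val hσ,
      Matrix.one_mul]
  have hW := congrArg ((vertices K)ᵀ * ·) hV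
  rw [← Matrix.mul_assoc, transpose_mul_vertices, PEquiv.mul_toMatrix_toPEquiv, Perm.inv_def,
    symm_symm] at hW
  refine Perm.ext fun j => by_contra fun hj => ?_
  have h := congrFun (congrFun hW j) j
  simp only [submatrix_apply, id, of_apply, if_true] at h
  rw [if_neg fun h' => hj h'.symm] at h
  exact four_ne_zero_of_neZero_two K (by linear_combination h)

end Tetrahedral

open Tetrahedral

def threeCycle : Perm (Fin 4) := swap 1 3 * swap 2 3

def doubleTransposition : Perm (Fin 4) := swap 0 1 * swap 2 3

lemma symmetry_threeCycle : symmetry ℂ threeCycle = Ematrix := by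
  refine symmetry_eq_of_mul_vertices ?_
  rw [vertices_mul_permMatrix_inv]
  ext i j
  fin_cases i <;> fin_cases j <;>
    simp [Ematrix, vertices, mul_apply, Fin.sum_univ_three, threeCycle, swap_apply_def]

lemma symmetry_doubleTransposition : symmetry ℂ doubleTransposition = L2matrix := by
  refine symmetry_eq_of_mul_vertices ?_
  rw [vertices_mul_permMatrix_inv]
  ext i j
  fin_cases i <;> fin_cases j <;>
    simp [L2matrix, vertices, mul_apply, Fin.sum_univ_three, doubleTransposition, swap_apply_def]

/-- `A₄` is the disjoint union of the subgroup `⟨c⟩` generated by `c = threeCycle` (3 elements)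
and the double coset `⟨c⟩ * doubleTransposition * ⟨c⟩` (9 elements). -/
lemma exists_eq_threeCycle_pow_mul_doubleTransposition_pow_mul_threeCycle_pow :
    ∀ σ : Perm (Fin 4), Perm.sign σ = 1 → ∃ a b : Fin 3, ∃ e : Fin 2,
      σ = threeCycle ^ (a : ℕ) * doubleTransposition ^ (e : ℕ) * threeCycle ^ (b : ℕ) := by
  decide

lemma alternatingGroup_eq_closure_threeCycle_doubleTransposition :
    alternatingGroup (Fin 4) = Subgroup.closure {threeCycle, doubleTransposition} := by
  have hc : threeCycle ∈ Subgroup.closure {threeCycle, doubleTransposition} :=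
    Subgroup.subset_closure (Set.mem_insert _ _)
  have hd : doubleTransposition ∈ Subgroup.closure {threeCycle, doubleTransposition} :=
    Subgroup.subset_closure (Set.mem_insert_of_mem _ rfl)
  refine le_antisymm (fun σ hσ => ?_) ((Subgroup.closure_le _).2 ?_)
  · obtain ⟨a, b, e, rfl⟩ :=
      exists_eq_threeCycle_pow_mul_doubleTransposition_pow_mul_threeCycle_pow σ hσ
    exact mul_mem (mul_mem (pow_mem hc _) (pow_mem hd _)) (pow_mem hc _)
  · rintro _ (rfl | rfl) <;> exact Perm.mem_alternatingGroup.2 (by decide)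

/-- The group `Δ(3·2²)`, generated by `E` and `L₂` inside `GL(3,ℂ)`,
is isomorphic to the alternating group `A₄`. -/
theorem delta_12_iso_A4 (E L : GL (Fin 3) ℂ)
    (hE : E.val = Ematrix) (hL : L.val = L2matrix) :
    Nonempty (↥(Subgroup.closure ({E, L} : Set (GL (Fin 3) ℂ))) ≃*
      ↥(alternatingGroup (Fin 4))) := by
  have hcE : symmetryHom ℂ threeCycle = E := Units.ext (symmetry_threeCycle.trans hE.symm)
  have hdL : symmetryHom ℂ doubleTransposition = L :=
    Units.ext (symmetry_doubleTransposition.trans hL.symm)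
  have hrange : Subgroup.closure {E, L} = (alternatingGroup (Fin 4)).map (symmetryHom ℂ) := by
    rw [alternatingGroup_eq_closure_threeCycle_doubleTransposition, MonoidHom.map_closure,
      Set.image_pair, hcE, hdL]
  exact ⟨(MulEquiv.subgroupCongr hrange).trans
    ((alternatingGroup (Fin 4)).equivMapOfInjective _ symmetryHom_injective).symm⟩
end

section
/- The subgroup of GL(3,ℂ) generated by the matrices E, I and L₂ = diag(1, −1, −1) (the group Δ(6·2²)) is isomorphic, as a group, to the symmetric group S₄ of all permutations of four objects (Mathlib: Equiv.Perm (Fin 4)). -/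
open Matrix

/-!
The rows `v₀, …, v₃` of `tetra` are alternate vertices of the cube `[-1, 1]³`; they sum to zero and
`tetra * tetraᵀ = 4 - J`. Hence `σ ↦ ¼ tetraᵀ P_σ tetra` is the standard representation of `S₄`
on the plane `∑ xᵢ = 0`, which permutes the `vᵢ`, and its twist by the sign permutes the four body
diagonals `±vᵢ` of the cube by rotations: this is the classical isomorphism of `S₄` with the
rotation group of the cube. This faithful representation sends `(1 3 2)`, `(1 3)` and
`(0 1)(2 3)` to `E`, `I` and `L₂`, and these three permutations generate `S₄` because they
produce the `4`-cycle `(0 3 2 1)` and the transposition `(0 1)` of two of its consecutive points.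
-/

open Equiv

noncomputable def MonoidHom.closureImageEquivOfInjective {G H : Type*} [Group G] [Group H]
    (f : G →* H) (hf : Function.Injective f) {s : Set G} (hs : Subgroup.closure s = ⊤) :
    Subgroup.closure (f '' s) ≃* G :=
  (MulEquiv.subgroupCongr (by rw [← MonoidHom.map_closure, hs, MonoidHom.range_eq_map])).trans
    (MonoidHom.ofInjective hf).symm

namespace Delta24

def tetra : Matrix (Fin 4) (Fin 3) ℤ := !![1, 1, 1; 1, -1, -1; -1, 1, -1; -1, -1, 1]

theorem tetra_mul_transpose : tetra * tetraᵀ = (4 : ℤ) • 1 - vecMulVec 1 1 := by decide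

theorem one_vecMul_tetra : 1 ᵥ* tetra = 0 := by decide

/-- Four times the matrix of the permutation representation on the plane `∑ xᵢ = 0` of `ℤ⁴`,
in its orthogonal basis formed by the columns of `tetra`. -/
def tetraConj (σ : Perm (Fin 4)) : Matrix (Fin 3) (Fin 3) ℤ :=
  tetraᵀ * (permMatrixHom σ : Matrix (Fin 4) (Fin 4) ℤ) * tetra

theorem tetraConj_mul (σ τ : Perm (Fin 4)) :
    tetraConj σ * tetraConj τ = (4 : ℤ) • tetraConj (σ * τ) := by
  have hones : (vecMulVec 1 1 : Matrix (Fin 4) (Fin 4) ℤ) *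
      ((permMatrixHom τ : Matrix (Fin 4) (Fin 4) ℤ) * tetra) = 0 := by
    rw [vecMulVec_mul, ← vecMul_vecMul, permMatrixHom_apply, vecMul_permMatrix, Pi.one_comp,
      one_vecMul_tetra]
    ext; simp [vecMulVec_apply]
  simp only [tetraConj, Matrix.mul_assoc, map_mul]
  rw [← Matrix.mul_assoc tetra, tetra_mul_transpose, Matrix.sub_mul, hones, sub_zero, smul_mul,
    Matrix.one_mul, Matrix.mul_smul, Matrix.mul_smul]

/-- The integer division is exact, see `four_smul_cubeRotation`. -/
def cubeRotation (σ : Perm (Fin 4)) : Matrix (Fin 3) (Fin 3) ℤ :=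
  ((Perm.sign σ : ℤ) • tetraConj σ).map (· / 4)

theorem four_smul_cubeRotation :
    ∀ σ, (4 : ℤ) • cubeRotation σ = (Perm.sign σ : ℤ) • tetraConj σ := by
  decide

theorem cubeRotation_mul (σ τ : Perm (Fin 4)) :
    cubeRotation (σ * τ) = cubeRotation σ * cubeRotation τ := by
  refine smul_right_injective _ (by norm_num : (16 : ℤ) ≠ 0) ?_
  calc (16 : ℤ) • cubeRotation (σ * τ)
      = (Perm.sign σ * Perm.sign τ : ℤ) • ((4 : ℤ) • tetraConj (σ * τ)) := by
        rw [show (16 : ℤ) = 4 * 4 by norm_num, mul_smul, four_smul_cubeRotation, map_mul,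
          Units.val_mul, smul_comm (4 : ℤ)]
    _ = ((4 : ℤ) • cubeRotation σ) * ((4 : ℤ) • cubeRotation τ) := by
        rw [four_smul_cubeRotation, four_smul_cubeRotation, smul_mul_smul_comm, tetraConj_mul]
    _ = (16 : ℤ) • (cubeRotation σ * cubeRotation τ) := by
        rw [smul_mul_smul_comm]; norm_num

def cubeRotationHom : Perm (Fin 4) →* Matrix (Fin 3) (Fin 3) ℤ where
  toFun := cubeRotation
  map_one' := by decide
  map_mul' := cubeRotation_mul

theorem cubeRotation_eq_one : ∀ σ, cubeRotation σ = 1 → σ = 1 := by decide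

variable (R : Type*) [CommRing R]

def cubeRotationGL : Perm (Fin 4) →* GL (Fin 3) R :=
  (Units.map (Int.castRingHom R).mapMatrix.toMonoidHom).comp cubeRotationHom.toHomUnits

theorem cubeRotationGL_val (σ : Perm (Fin 4)) :
    (cubeRotationGL R σ).val = (cubeRotation σ).map (Int.cast : ℤ → R) :=
  rfl

theorem cubeRotationGL_injective [CharZero R] : Function.Injective (cubeRotationGL R) := by
  refine (injective_iff_map_eq_one _).2 fun σ hσ ↦ cubeRotation_eq_one σ ?_
  have h := congrArg Units.val hσ
  rw [cubeRotationGL_val, Units.val_one, ← Matrix.map_one _ Int.cast_zero Int.cast_one] at h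
  exact Matrix.map_injective Int.cast_injective h

theorem cubeRotationGL_cycle : (cubeRotationGL ℂ c[1, 3, 2]).val = Ematrix := by
  rw [cubeRotationGL_val,
    show cubeRotation c[1, 3, 2] = !![0, 1, 0; 0, 0, 1; 1, 0, 0] by decide]
  simp [Ematrix, ← Matrix.ext_iff, Fin.forall_fin_succ]

theorem cubeRotationGL_swap : (cubeRotationGL ℂ (swap 1 3)).val = Imatrix := by
  rw [cubeRotationGL_val,
    show cubeRotation (swap 1 3) = !![0, 0, -1; 0, -1, 0; -1, 0, 0] by decide]
  simp [Imatrix, ← Matrix.ext_iff, Fin.forall_fin_succ]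

theorem cubeRotationGL_swap_mul_swap :
    (cubeRotationGL ℂ (swap 0 1 * swap 2 3)).val = L2matrix := by
  rw [cubeRotationGL_val,
    show cubeRotation (swap 0 1 * swap 2 3) = diagonal ![1, -1, -1] by decide]
  simp [L2matrix, Fin.forall_fin_succ]

theorem closure_generators :
    Subgroup.closure ({c[1, 3, 2], swap 1 3, swap 0 1 * swap 2 3} : Set (Perm (Fin 4))) = ⊤ := by
  set H := Subgroup.closure ({c[1, 3, 2], swap 1 3, swap 0 1 * swap 2 3} : Set (Perm (Fin 4)))
  have ha : c[1, 3, 2] ∈ H := Subgroup.subset_closure (by simp)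
  have hb : swap 1 3 ∈ H := Subgroup.subset_closure (by simp)
  have hc : swap 0 1 * swap 2 3 ∈ H := Subgroup.subset_closure (by simp)
  have hcycle : swap 1 3 * (swap 0 1 * swap 2 3) = c[(0 : Fin 4), 3, 2, 1] := by decide
  have hswap : swap 1 (c[(0 : Fin 4), 3, 2, 1] 1) = swap 1 3 * c[1, 3, 2] * (swap 0 1 * swap 2 3) :=
    by decide
  have hgen := Perm.closure_cycle_adjacent_swap (Cycle.isCycle_formPerm _ _ (by simp))
    (show c[(0 : Fin 4), 3, 2, 1].support = Finset.univ by decide) 1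
  rw [eq_top_iff, ← hgen, Subgroup.closure_le, Set.insert_subset_iff, Set.singleton_subset_iff,
    hswap, ← hcycle]
  exact ⟨mul_mem hb hc, mul_mem (mul_mem hb ha) hc⟩

end Delta24

/-- The group `Δ(6·2²)`, generated by `E`, `I` and `L₂` inside `GL(3,ℂ)`,
is isomorphic to the symmetric group `S₄`. -/
theorem delta_24_iso_S4 (E I L : GL (Fin 3) ℂ)
    (hE : E.val = Ematrix) (hI : I.val = Imatrix) (hL : L.val = L2matrix) :
    Nonempty (↥(Subgroup.closure ({E, I, L} : Set (GL (Fin 3) ℂ))) ≃*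
      Equiv.Perm (Fin 4)) := by
  have hgen : ({E, I, L} : Set (GL (Fin 3) ℂ)) =
      Delta24.cubeRotationGL ℂ '' {c[1, 3, 2], swap 1 3, swap 0 1 * swap 2 3} := by
    rw [Set.image_insert_eq, Set.image_insert_eq, Set.image_singleton,
      Units.ext (Delta24.cubeRotationGL_cycle.trans hE.symm),
      Units.ext (Delta24.cubeRotationGL_swap.trans hI.symm),
      Units.ext (Delta24.cubeRotationGL_swap_mul_swap.trans hL.symm)]
  rw [hgen]
  exact ⟨(Delta24.cubeRotationGL ℂ).closureImageEquivOfInjective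
    (Delta24.cubeRotationGL_injective ℂ) Delta24.closure_generators⟩
end

section
/- Let n be a positive integer not divisible by 3 and let m be a positive integer. Then the subgroup of GL(3,ℂ) generated by L_n and E_m (this is the group Δ(3n², m)) has order 3^m·n². -/
/-!
Write `P` for the permutation matrix of `j ↦ j + 1` on `Fin 3`. Both generators are monomial
matrices `μ^k P^k diag(ν^(d 0), ν^(d 1), ν^(d 2))` with `d 0 + d 1 + d 2 = 0`, and these form a
group, so every element of `Δ(3n², m)` has this shape; conversely `E^k L^(a+b) (E L E⁻¹)^a`
realises `d = (a, b, -a-b)`. Two such matrices agree iff `k ≡ k' (mod 3)` and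
`μ^(k-k') = ν^(d' j - d j)` for all `j`. Since `3^m` and `n` are coprime, a `3^m`-th root of
unity that is also an `n`-th root of unity is `1`, so this happens iff `k ≡ k' (mod 3^m)` and
`d ≡ d' (mod n)`: the group is parametrised by `ZMod (3^m) × ZMod n × ZMod n`.
-/

open Matrix

/-- The matrix `E_m`, with entries `μ = exp(2πi/3^m)` in positions `(0,1)`, `(1,2)`, `(2,0)`
and `0` elsewhere. -/
noncomputable def EMmatrix (m : ℕ) : Matrix (Fin 3) (Fin 3) ℂ :=
  Complex.exp (2 * (Real.pi : ℂ) * Complex.I / ((3 : ℂ) ^ m)) •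
    (!![0, 1, 0; 0, 0, 1; 1, 0, 0] : Matrix (Fin 3) (Fin 3) ℂ)

theorem IsPrimitiveRoot.zpow_eq_zpow_iff_of_coprime {G : Type*} [CommGroup G] {μ ν : G}
    {p q : ℕ} (hμ : IsPrimitiveRoot μ p) (hν : IsPrimitiveRoot ν q) (hpq : p.Coprime q)
    {a b : ℤ} : μ ^ a = ν ^ b ↔ (p : ℤ) ∣ a ∧ (q : ℤ) ∣ b := by
  rw [← hμ.zpow_eq_one_iff_dvd, ← hν.zpow_eq_one_iff_dvd]
  refine ⟨fun h => ?_, fun ⟨ha, hb⟩ => by rw [ha, hb]⟩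
  have hp : (μ ^ a) ^ p = 1 := by
    rw [← zpow_natCast, _root_.zpow_comm, zpow_natCast, hμ.pow_eq_one, _root_.one_zpow]
  have hq : (μ ^ a) ^ q = 1 := by
    rw [h, ← zpow_natCast, _root_.zpow_comm, zpow_natCast, hν.pow_eq_one, _root_.one_zpow]
  have h1 : μ ^ a = 1 := by simpa [hpq] using pow_gcd_eq_one.mpr ⟨hp, hq⟩
  exact ⟨h1, h ▸ h1⟩

section MonomialMatrix

variable {ι K : Type*} [AddCommGroup ι] [DecidableEq ι] [CommRing K]

def monomialMatrix (s : ι) (μ ν : Kˣ) (k : ℤ) (d : ι → ℤ) : Matrix ι ι K :=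
  fun i j => if j = i + k • s then ((μ ^ k * ν ^ d j : Kˣ) : K) else 0

section Algebra

variable (s : ι) (μ ν : Kˣ)

theorem monomialMatrix_zero_zero : monomialMatrix s μ ν 0 0 = 1 := by
  ext i j
  simp [monomialMatrix, Matrix.one_apply, eq_comm]

variable [Fintype ι]

theorem monomialMatrix_mul (k k' : ℤ) (d d' : ι → ℤ) :
    monomialMatrix s μ ν k d * monomialMatrix s μ ν k' d' =
      monomialMatrix s μ ν (k + k') (fun j => d (j - k' • s) + d' j) := by
  ext i j
  rw [Matrix.mul_apply, Finset.sum_eq_single (i + k • s)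
    (fun l _ hl => by simp [monomialMatrix, hl]) (by simp)]
  by_cases hj : j = i + (k + k') • s
  · have hl : i + k • s = j - k' • s := by rw [hj, add_zsmul]; abel
    simp only [monomialMatrix, if_true, hl, sub_add_cancel, hj.symm]
    push_cast [_root_.zpow_add]
    ring
  · have : j ≠ i + k • s + k' • s := by rwa [add_assoc, ← add_zsmul]
    simp [monomialMatrix, hj, this]

theorem monomialMatrix_mul_inv (k : ℤ) (d : ι → ℤ) :
    monomialMatrix s μ ν k d * monomialMatrix s μ ν (-k) (fun j => -d (j + k • s)) = 1 := by
  rw [monomialMatrix_mul, ← monomialMatrix_zero_zero s μ ν]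
  congr 1
  · simp
  · ext j
    simp

theorem val_inv_of_val_eq_monomialMatrix {x : GL ι K} {k : ℤ} {d : ι → ℤ}
    (hx : x.val = monomialMatrix s μ ν k d) :
    (x⁻¹).val = monomialMatrix s μ ν (-k) (fun j => -d (j + k • s)) := by
  rw [← Units.inv_mul_cancel_left x (monomialMatrix s μ ν _ _), hx, monomialMatrix_mul_inv,
    mul_one]

theorem monomialMatrix_shift_pow (k : ℤ) (t : ℕ) :
    monomialMatrix s μ ν k 0 ^ t = monomialMatrix s μ ν (t * k) 0 := by
  induction t with
  | zero => simp [monomialMatrix_zero_zero]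
  | succ t ih =>
    rw [pow_succ, ih, monomialMatrix_mul]
    congr 1
    push_cast
    ring

theorem monomialMatrix_diagonal_pow (d : ι → ℤ) (t : ℕ) :
    monomialMatrix s μ ν 0 d ^ t = monomialMatrix s μ ν 0 (t • d) := by
  induction t with
  | zero => simp [monomialMatrix_zero_zero]
  | succ t ih =>
    rw [pow_succ, ih, monomialMatrix_mul, add_smul, one_smul]
    congr 1
    ext j
    simp

def monomialSubgroup : Subgroup (GL ι K) where
  carrier := {x | ∃ k d, ∑ j, d j = 0 ∧ x.val = monomialMatrix s μ ν k d}
  one_mem' := ⟨0, 0, by simp, (monomialMatrix_zero_zero s μ ν).symm⟩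
  mul_mem' := by
    rintro x y ⟨k, d, hd, hx⟩ ⟨k', d', hd', hy⟩
    refine ⟨_, _, ?_, by rw [Units.val_mul, hx, hy, monomialMatrix_mul]⟩
    rw [Finset.sum_add_distrib, hd', add_zero]
    exact (Equiv.sum_comp (Equiv.subRight (k' • s)) d).trans hd
  inv_mem' := by
    rintro x ⟨k, d, hd, hx⟩
    refine ⟨_, _, ?_, val_inv_of_val_eq_monomialMatrix s μ ν hx⟩
    rw [Finset.sum_neg_distrib, neg_eq_zero]
    exact (Equiv.sum_comp (Equiv.addRight (k • s)) d).trans hd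

end Algebra

section Injectivity

variable [Nontrivial K] (s : ι) {μ ν : Kˣ}

theorem monomialMatrix_eq_monomialMatrix_iff {k k' : ℤ} {d d' : ι → ℤ} :
    monomialMatrix s μ ν k d = monomialMatrix s μ ν k' d' ↔
      k • s = k' • s ∧ ∀ j, μ ^ k * ν ^ d j = μ ^ k' * ν ^ d' j := by
  constructor
  · intro h
    have hentry : ∀ j, monomialMatrix s μ ν k d (j - k • s) j =
        monomialMatrix s μ ν k' d' (j - k • s) j := fun j => by rw [h]
    have hshift : k • s = k' • s := by
      by_contra hne
      have h0 := hentry 0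
      simp only [monomialMatrix] at h0
      rw [if_pos (by abel),
        if_neg (fun h => hne (by rwa [eq_comm, zero_sub, neg_add_eq_zero] at h))] at h0
      exact (μ ^ k * ν ^ d 0).ne_zero (by rw [Units.val_mul]; exact h0)
    exact ⟨hshift, fun j => Units.ext (by simpa [monomialMatrix, hshift] using hentry j)⟩
  · rintro ⟨hshift, hentry⟩
    ext i j
    simp only [monomialMatrix, hshift, hentry]

theorem monomialMatrix_eq_monomialMatrix_iff_of_isPrimitiveRoot {p q : ℕ} (hs : p • s = 0)
    (hμ : IsPrimitiveRoot μ p) (hν : IsPrimitiveRoot ν q) (hpq : p.Coprime q)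
    {k k' : ℤ} {d d' : ι → ℤ} :
    monomialMatrix s μ ν k d = monomialMatrix s μ ν k' d' ↔
      (k : ZMod p) = k' ∧ ∀ j, (d j : ZMod q) = d' j := by
  have hentry : ∀ j, μ ^ k * ν ^ d j = μ ^ k' * ν ^ d' j ↔
      (k : ZMod p) = k' ∧ (d j : ZMod q) = d' j := fun j => by
    rw [ZMod.intCast_eq_intCast_iff_dvd_sub, eq_comm (a := (d j : ZMod q)),
      ZMod.intCast_eq_intCast_iff_dvd_sub, ← hμ.zpow_eq_zpow_iff_of_coprime hν hpq,
      _root_.zpow_sub, _root_.zpow_sub, ← div_eq_mul_inv, ← div_eq_mul_inv,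
      div_eq_div_iff_mul_eq_mul, eq_comm, mul_comm (ν ^ d j)]
  have hshift : (k : ZMod p) = k' → k • s = k' • s := fun h => by
    obtain ⟨t, ht⟩ := (ZMod.intCast_eq_intCast_iff_dvd_sub _ _ _).mp h
    have h0 : (k' - k) • s = 0 := by rw [ht, mul_comm, mul_zsmul, natCast_zsmul, hs, zsmul_zero]
    rw [sub_zsmul, add_neg_eq_zero] at h0
    exact h0.symm
  rw [monomialMatrix_eq_monomialMatrix_iff, forall_congr' hentry]
  exact ⟨fun ⟨_, h⟩ => ⟨(h 0).1, fun j => (h j).2⟩,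
    fun ⟨hk, hd⟩ => ⟨hshift hk, fun j => ⟨hk, hd j⟩⟩⟩

end Injectivity

end MonomialMatrix

section DeltaGroup

def deltaWord {G : Type*} [Group G] (L E : G) (k a b : ℕ) : G :=
  E ^ k * L ^ (a + b) * (E * L * E⁻¹) ^ a

theorem deltaWord_mem_closure {G : Type*} [Group G] (L E : G) (k a b : ℕ) :
    deltaWord L E k a b ∈ Subgroup.closure {L, E} := by
  have hL : L ∈ Subgroup.closure {L, E} := Subgroup.subset_closure (by simp)
  have hE : E ∈ Subgroup.closure {L, E} := Subgroup.subset_closure (by simp)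
  exact mul_mem (mul_mem (pow_mem hE _) (pow_mem hL _))
    (pow_mem (mul_mem (mul_mem hE hL) (inv_mem hE)) _)

theorem nsmul_one_fin_three_eq_zero {p : ℕ} (hp : 3 ∣ p) : p • (1 : Fin 3) = 0 := by
  obtain ⟨t, rfl⟩ := hp
  rw [mul_nsmul, show 3 • (1 : Fin 3) = 0 by decide, nsmul_zero]

variable {K : Type*} [CommRing K] {μ ν : Kˣ} {L E : GL (Fin 3) K}

theorem val_deltaWord (hL : L.val = monomialMatrix 1 μ ν 0 ![0, 1, -1])
    (hE : E.val = monomialMatrix 1 μ ν 1 0) (k a b : ℕ) :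
    (deltaWord L E k a b).val = monomialMatrix 1 μ ν k ![a, b, -a - b] := by
  have hC : (E * L * E⁻¹).val = monomialMatrix 1 μ ν 0 ![1, -1, 0] := by
    rw [Units.val_mul, Units.val_mul, hE, hL, val_inv_of_val_eq_monomialMatrix 1 μ ν hE,
      monomialMatrix_mul, monomialMatrix_mul]
    congr 1
    ext j
    fin_cases j <;> simp
  simp only [deltaWord, Units.val_mul, Units.val_pow_eq_pow_val, hE, hL, hC,
    monomialMatrix_shift_pow, monomialMatrix_diagonal_pow, monomialMatrix_mul]
  congr 1
  · simp
  · ext j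
    fin_cases j <;> simp; ring

theorem closure_le_monomialSubgroup (hL : L.val = monomialMatrix 1 μ ν 0 ![0, 1, -1])
    (hE : E.val = monomialMatrix 1 μ ν 1 0) :
    Subgroup.closure {L, E} ≤ monomialSubgroup 1 μ ν := by
  rw [Subgroup.closure_le, Set.insert_subset_iff, Set.singleton_subset_iff]
  exact ⟨⟨0, _, by simp [Fin.sum_univ_three], hL⟩, ⟨1, 0, by simp, hE⟩⟩

variable [Nontrivial K] {p q : ℕ} [NeZero p] [NeZero q]

theorem deltaWord_injective (hp : 3 ∣ p) (hμ : IsPrimitiveRoot μ p) (hν : IsPrimitiveRoot ν q)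
    (hpq : p.Coprime q) (hL : L.val = monomialMatrix 1 μ ν 0 ![0, 1, -1])
    (hE : E.val = monomialMatrix 1 μ ν 1 0) :
    Function.Injective fun x : ZMod p × ZMod q × ZMod q =>
      deltaWord L E x.1.val x.2.1.val x.2.2.val := by
  rintro ⟨k, a, b⟩ ⟨k', a', b'⟩ h
  have h' := congrArg Units.val h
  simp only [val_deltaWord hL hE, monomialMatrix_eq_monomialMatrix_iff_of_isPrimitiveRoot 1
    (nsmul_one_fin_three_eq_zero hp) hμ hν hpq] at h'
  obtain ⟨hk, hd⟩ := h'
  have ha := hd 0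
  have hb := hd 1
  simp only [ZMod.natCast_val, ZMod.intCast_cast, ZMod.cast_id', id_eq, Fin.isValue,
    cons_val_zero, cons_val_one] at hk ha hb
  simp [hk, ha, hb]

theorem range_deltaWord (hp : 3 ∣ p) (hμ : IsPrimitiveRoot μ p) (hν : IsPrimitiveRoot ν q)
    (hpq : p.Coprime q) (hL : L.val = monomialMatrix 1 μ ν 0 ![0, 1, -1])
    (hE : E.val = monomialMatrix 1 μ ν 1 0) :
    Set.range (fun x : ZMod p × ZMod q × ZMod q => deltaWord L E x.1.val x.2.1.val x.2.2.val) =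
      Subgroup.closure {L, E} := by
  refine subset_antisymm (Set.range_subset_iff.mpr fun _ => deltaWord_mem_closure _ _ _ _ _)
    fun x hx => ?_
  obtain ⟨k, d, hd, hxd⟩ := closure_le_monomialSubgroup hL hE hx
  refine ⟨(k, d 0, d 1), Units.ext ?_⟩
  rw [val_deltaWord hL hE, hxd, monomialMatrix_eq_monomialMatrix_iff_of_isPrimitiveRoot 1
    (nsmul_one_fin_three_eq_zero hp) hμ hν hpq]
  refine ⟨by simp, fun j => ?_⟩
  rw [Fin.sum_univ_three] at hd
  fin_cases j <;> simp [show d 2 = -d 0 - d 1 by omega]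

theorem card_closure_of_isPrimitiveRoot (hp : 3 ∣ p) (hμ : IsPrimitiveRoot μ p)
    (hν : IsPrimitiveRoot ν q) (hpq : p.Coprime q)
    (hL : L.val = monomialMatrix 1 μ ν 0 ![0, 1, -1]) (hE : E.val = monomialMatrix 1 μ ν 1 0) :
    Nat.card (Subgroup.closure {L, E}) = p * q ^ 2 := by
  calc Nat.card (Subgroup.closure {L, E})
      = Nat.card (ZMod p × ZMod q × ZMod q) :=
        (Nat.card_congr (Equiv.setCongr (range_deltaWord hp hμ hν hpq hL hE))).symm.trans
          (Nat.card_range_of_injective (deltaWord_injective hp hμ hν hpq hL hE))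
    _ = p * q ^ 2 := by rw [Nat.card_prod, Nat.card_prod, Nat.card_zmod, Nat.card_zmod, sq]

end DeltaGroup

noncomputable def unitRoot (n : ℕ) : ℂˣ :=
  Units.mk0 (Complex.exp (2 * Real.pi * Complex.I / n)) (Complex.exp_ne_zero _)

theorem isPrimitiveRoot_unitRoot {n : ℕ} (hn : n ≠ 0) : IsPrimitiveRoot (unitRoot n) n :=
  IsPrimitiveRoot.coe_units_iff.mp (Complex.isPrimitiveRoot_exp n hn)

theorem Lmatrix_eq_monomialMatrix (μ : ℂˣ) (n : ℕ) :
    Lmatrix n = monomialMatrix 1 μ (unitRoot n) 0 ![0, 1, -1] := by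
  ext i j
  fin_cases i <;> fin_cases j <;> simp [Lmatrix, monomialMatrix, unitRoot]

theorem EMmatrix_eq_monomialMatrix (ν : ℂˣ) (m : ℕ) :
    EMmatrix m = monomialMatrix 1 (unitRoot (3 ^ m)) ν 1 0 := by
  ext i j
  fin_cases i <;> fin_cases j <;> simp [EMmatrix, monomialMatrix, unitRoot]

/-- The group `Δ(3n², m)`, generated by `L_n` and `E_m` inside `GL(3,ℂ)`,
has order `3^m·n²`. -/
theorem delta_3n2m_order (n : ℕ) (hn : 0 < n) (hn3 : ¬ 3 ∣ n)
    (m : ℕ) (hm : 0 < m)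
    (L Em : GL (Fin 3) ℂ)
    (hL : L.val = Lmatrix n) (hEm : Em.val = EMmatrix m) :
    Nat.card ↥(Subgroup.closure ({L, Em} : Set (GL (Fin 3) ℂ))) = 3 ^ m * n ^ 2 := by
  have : NeZero n := ⟨hn.ne'⟩
  have hcop : (3 ^ m).Coprime n :=
    ((Nat.Prime.coprime_iff_not_dvd Nat.prime_three).mpr hn3).pow_left m
  exact card_closure_of_isPrimitiveRoot (dvd_pow_self 3 hm.ne')
    (isPrimitiveRoot_unitRoot (pow_ne_zero m three_ne_zero)) (isPrimitiveRoot_unitRoot hn.ne') hcop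
    (hL.trans (Lmatrix_eq_monomialMatrix _ n)) (hEm.trans (EMmatrix_eq_monomialMatrix _ m))
end
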